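/- arXiv:2312.11393 — 4 statements merged into one kernel-verified Lean document; each statement's English description precedes it below -/
import Mathlib

section
/- If the model is correctly specified in the sense that P(Y = j) = P(α_{j−1} < Z ≤ α_j) for every j ∈ {1,…,J}, then the surrogate variable S has the same distribution as Z: P(S ≤ c) = P(Z ≤ c) for every real c. -/
open MeasureTheory

/-- If the model is correctly specified, i.e.
P(Y = j) = P(α_{j−1} < Z ≤ α_j) for every j ∈ {1,…,J}, then the surrogate
variable S has the same distribution as Z: P(S ≤ c) = P(Z ≤ c) for all real c. -/
theorem surrogate_distribution_correct_specification
    {Ω : Type*} [MeasurableSpace Ω] (P : Measure Ω) [IsProbabilityMeasure P]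
    (Z S : Ω → ℝ) (Y : Ω → ℕ)
    (hZ : Measurable Z) (hS : Measurable S) (hYm : Measurable Y)
    (J : ℕ) (hJ : 1 ≤ J)
    (α : ℕ → EReal) (hα0 : α 0 = ⊥) (hαJ : α J = ⊤)
    (hmono : StrictMonoOn α (Set.Icc 0 J))
    (hpos : ∀ j, 1 ≤ j → j ≤ J →
      0 < (P {ω | α (j - 1) < (Z ω : EReal) ∧ (Z ω : EReal) ≤ α j}).toReal)
    (hY : ∀ ω, 1 ≤ Y ω ∧ Y ω ≤ J)
    (hsurr : ∀ j, 1 ≤ j → j ≤ J → ∀ c : ℝ,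
      (P {ω | S ω ≤ c ∧ Y ω = j}).toReal
        = (P {ω | Y ω = j}).toReal *
          ((P {ω | Z ω ≤ c ∧ α (j - 1) < (Z ω : EReal) ∧ (Z ω : EReal) ≤ α j}).toReal
            / (P {ω | α (j - 1) < (Z ω : EReal) ∧ (Z ω : EReal) ≤ α j}).toReal))
    (hcorrect : ∀ j, 1 ≤ j → j ≤ J →
      (P {ω | Y ω = j}).toReal
        = (P {ω | α (j - 1) < (Z ω : EReal) ∧ (Z ω : EReal) ≤ α j}).toReal) :
    ∀ c : ℝ, (P {ω | S ω ≤ c}).toReal = (P {ω | Z ω ≤ c}).toReal := by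
  classical
  intro c
  have hZE : Measurable fun ω => (Z ω : EReal) := measurable_coe_real_ereal.comp hZ
  -- measurability of the pieces
  have hmS : ∀ j : ℕ, MeasurableSet {ω | S ω ≤ c ∧ Y ω = j} := fun j =>
    (hS measurableSet_Iic).inter (hYm (measurableSet_singleton j))
  have hmZ : ∀ j : ℕ, MeasurableSet
      {ω | Z ω ≤ c ∧ α (j - 1) < (Z ω : EReal) ∧ (Z ω : EReal) ≤ α j} := fun j =>
    (hZ measurableSet_Iic).inter
      ((hZE measurableSet_Ioi).inter (hZE measurableSet_Iic))
  -- existence of a bin for each real value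
  have hexist : ∀ z : ℝ, ∃ j, 1 ≤ j ∧ j ≤ J ∧ α (j - 1) < (z : EReal) ∧ (z : EReal) ≤ α j := by
    intro z
    have hex : ∃ n, n ≤ J ∧ (z : EReal) ≤ α n := ⟨J, le_rfl, hαJ ▸ le_top⟩
    have hjJ := (Nat.find_spec hex).1
    have hzj := (Nat.find_spec hex).2
    have hj0 : Nat.find hex ≠ 0 := by
      intro h
      rw [h, hα0, le_bot_iff] at hzj
      exact EReal.coe_ne_bot z hzj
    have hmin := Nat.find_min hex (Nat.sub_lt (Nat.pos_of_ne_zero hj0) one_pos)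
    push_neg at hmin
    exact ⟨Nat.find hex, Nat.one_le_iff_ne_zero.2 hj0, hjJ,
      hmin (le_trans (Nat.sub_le _ _) hjJ), hzj⟩
  -- set decompositions
  have hSset : {ω | S ω ≤ c} = ⋃ j ∈ Finset.Icc 1 J, {ω | S ω ≤ c ∧ Y ω = j} := by
    ext ω
    simp only [Set.mem_setOf_eq, Set.mem_iUnion, Finset.mem_Icc, exists_prop]
    constructor
    · intro h; exact ⟨Y ω, ⟨(hY ω).1, (hY ω).2⟩, h, rfl⟩
    · rintro ⟨j, _, h, _⟩; exact h
  have hZset : {ω | Z ω ≤ c}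
      = ⋃ j ∈ Finset.Icc 1 J,
          {ω | Z ω ≤ c ∧ α (j - 1) < (Z ω : EReal) ∧ (Z ω : EReal) ≤ α j} := by
    ext ω
    simp only [Set.mem_setOf_eq, Set.mem_iUnion, Finset.mem_Icc, exists_prop]
    constructor
    · intro h
      obtain ⟨j, hj1, hjJ, h1, h2⟩ := hexist (Z ω)
      exact ⟨j, ⟨hj1, hjJ⟩, h, h1, h2⟩
    · rintro ⟨j, _, h, _⟩; exact h
  -- disjointness
  have hdS : (↑(Finset.Icc 1 J) : Set ℕ).PairwiseDisjoint
      (fun j => {ω | S ω ≤ c ∧ Y ω = j}) := by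
    intro i _ j _ hij
    refine Set.disjoint_left.2 ?_
    rintro ω ⟨_, h1⟩ ⟨_, h2⟩
    exact hij (h1 ▸ h2 ▸ rfl)
  have hdZ : (↑(Finset.Icc 1 J) : Set ℕ).PairwiseDisjoint
      (fun j => {ω | Z ω ≤ c ∧ α (j - 1) < (Z ω : EReal) ∧ (Z ω : EReal) ≤ α j}) := by
    have key : ∀ i j : ℕ, i ∈ Finset.Icc 1 J → j ∈ Finset.Icc 1 J → i < j →
        Disjoint {ω | Z ω ≤ c ∧ α (i - 1) < (Z ω : EReal) ∧ (Z ω : EReal) ≤ α i}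
          {ω | Z ω ≤ c ∧ α (j - 1) < (Z ω : EReal) ∧ (Z ω : EReal) ≤ α j} := by
      intro i j hi hj hij
      simp only [Finset.mem_Icc] at hi hj
      refine Set.disjoint_left.2 ?_
      rintro ω ⟨_, _, hi2⟩ ⟨_, hj1, _⟩
      have hle : α i ≤ α (j - 1) :=
        hmono.monotoneOn ⟨Nat.zero_le _, hi.2⟩
          ⟨Nat.zero_le _, le_trans (Nat.sub_le _ _) hj.2⟩ (Nat.le_sub_one_of_lt hij)
      exact absurd hi2 (not_le.2 (hle.trans_lt hj1))
    intro i hi j hj hij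
    rcases lt_or_gt_of_ne hij with h | h
    · exact key i j hi hj h
    · exact (key j i hj hi h).symm
  -- measure of unions as sums
  have hsumS : P {ω | S ω ≤ c}
      = ∑ j ∈ Finset.Icc 1 J, P {ω | S ω ≤ c ∧ Y ω = j} := by
    rw [hSset, measure_biUnion_finset hdS (fun j _ => hmS j)]
  have hsumZ : P {ω | Z ω ≤ c}
      = ∑ j ∈ Finset.Icc 1 J,
          P {ω | Z ω ≤ c ∧ α (j - 1) < (Z ω : EReal) ∧ (Z ω : EReal) ≤ α j} := by
    rw [hZset, measure_biUnion_finset hdZ (fun j _ => hmZ j)]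
  rw [hsumS, hsumZ, ENNReal.toReal_sum (fun j _ => measure_ne_top P _),
    ENNReal.toReal_sum (fun j _ => measure_ne_top P _)]
  refine Finset.sum_congr rfl fun j hj => ?_
  simp only [Finset.mem_Icc] at hj
  rw [hsurr j hj.1 hj.2 c, hcorrect j hj.1 hj.2,
    mul_div_cancel₀ _ (ne_of_gt (hpos j hj.1 hj.2))]
end

section
/- Suppose Z is Gaussian with mean m and variance 1, i.e., P(Z ≤ c) = Φ(c − m) for all real c, and suppose the categorical model is correctly specified: P(Y = j) = Φ(α_j − m) − Φ(α_{j−1} − m) for every j ∈ {1,…,J} (with the conventions Φ(−∞) = 0 and Φ(+∞) = 1). Then the surrogate residual R = S − m has the standard normal distribution: P(R ≤ c) = Φ(c) for every real c. -/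
open MeasureTheory

/-- Φ: the cumulative distribution function of the standard normal N(0,1). -/
noncomputable def stdNormalCDF (x : ℝ) : ℝ :=
  ((ProbabilityTheory.gaussianReal 0 1) (Set.Iic x)).toReal

/-- Extension of Φ to the extended reals, with Φ(−∞) = 0 and Φ(+∞) = 1. -/
noncomputable def stdNormalCDFE (x : EReal) : ℝ :=
  if x = ⊥ then 0 else if x = ⊤ then 1 else stdNormalCDF x.toReal

/-- If Z is Gaussian with mean m and variance 1, i.e.
P(Z ≤ c) = Φ(c − m), and the categorical model is correctly specified:
P(Y = j) = Φ(α_j − m) − Φ(α_{j−1} − m) for every j ∈ {1,…,J}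
(with Φ(−∞) = 0 and Φ(+∞) = 1), then the surrogate residual R = S − m has
the standard normal distribution: P(R ≤ c) = Φ(c) for every real c. -/
theorem surrogate_residual_standard_normal
    {Ω : Type*} [MeasurableSpace Ω] (P : Measure Ω) [IsProbabilityMeasure P]
    (Z S : Ω → ℝ) (Y : Ω → ℕ)
    (hZ : Measurable Z) (hS : Measurable S) (hYm : Measurable Y)
    (J : ℕ) (hJ : 1 ≤ J)
    (α : ℕ → EReal) (hα0 : α 0 = ⊥) (hαJ : α J = ⊤)
    (hmono : StrictMonoOn α (Set.Icc 0 J))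
    (hpos : ∀ j, 1 ≤ j → j ≤ J →
      0 < (P {ω | α (j - 1) < (Z ω : EReal) ∧ (Z ω : EReal) ≤ α j}).toReal)
    (hY : ∀ ω, 1 ≤ Y ω ∧ Y ω ≤ J)
    (hsurr : ∀ j, 1 ≤ j → j ≤ J → ∀ c : ℝ,
      (P {ω | S ω ≤ c ∧ Y ω = j}).toReal
        = (P {ω | Y ω = j}).toReal *
          ((P {ω | Z ω ≤ c ∧ α (j - 1) < (Z ω : EReal) ∧ (Z ω : EReal) ≤ α j}).toReal
            / (P {ω | α (j - 1) < (Z ω : EReal) ∧ (Z ω : EReal) ≤ α j}).toReal))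
    (m : ℝ)
    (hgauss : ∀ c : ℝ, (P {ω | Z ω ≤ c}).toReal = stdNormalCDF (c - m))
    (hcorrect : ∀ j, 1 ≤ j → j ≤ J →
      (P {ω | Y ω = j}).toReal
        = stdNormalCDFE (α j - (m : EReal)) - stdNormalCDFE (α (j - 1) - (m : EReal))) :
    ∀ c : ℝ, (P {ω | S ω - m ≤ c}).toReal = stdNormalCDF c := by
  intro c
  set c' : ℝ := c + m with hc'def
  -- measurability of the EReal-valued coercion of Z
  have hZE : Measurable (fun ω => (Z ω : EReal)) := measurable_coe_real_ereal.comp hZ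
  -- Lemma F : CDF of Z at extended thresholds
  have hF : ∀ a : EReal, (P {ω | (Z ω : EReal) ≤ a}).toReal = stdNormalCDFE (a - (m : EReal)) := by
    intro a
    induction a using EReal.rec with
    | bot =>
        have : {ω | (Z ω : EReal) ≤ ⊥} = ∅ := by ext ω; simp
        simp [this, stdNormalCDFE]
    | coe r =>
        have h1 : {ω | (Z ω : EReal) ≤ (r : EReal)} = {ω | Z ω ≤ r} := by
          ext ω; simp [EReal.coe_le_coe_iff]
        have h2 : (r : EReal) - (m : EReal) = ((r - m : ℝ) : EReal) := by
          rw [EReal.coe_sub]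
        rw [h1, hgauss, h2, stdNormalCDFE,
          if_neg (EReal.coe_ne_bot _), if_neg (EReal.coe_ne_top _), EReal.toReal_coe]
    | top =>
        have : {ω | (Z ω : EReal) ≤ ⊤} = Set.univ := by ext ω; simp
        simp [this, stdNormalCDFE]
  -- measurable sets
  have hmA : ∀ j : ℕ, MeasurableSet {ω | α (j - 1) < (Z ω : EReal) ∧ (Z ω : EReal) ≤ α j} := by
    intro j
    exact (hZE measurableSet_Ioi).inter (hZE measurableSet_Iic)
  have hmLe : ∀ a : EReal, MeasurableSet {ω | (Z ω : EReal) ≤ a} := fun a =>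
    hZE measurableSet_Iic
  -- Lemma D : probability of truncation interval
  have hD : ∀ j, 1 ≤ j → j ≤ J →
      (P {ω | α (j - 1) < (Z ω : EReal) ∧ (Z ω : EReal) ≤ α j}).toReal
        = stdNormalCDFE (α j - (m : EReal)) - stdNormalCDFE (α (j - 1) - (m : EReal)) := by
    intro j hj1 hjJ
    have hab : α (j - 1) ≤ α j := by
      exact (hmono.monotoneOn) (Set.mem_Icc.mpr ⟨Nat.zero_le _, by omega⟩)
        (Set.mem_Icc.mpr ⟨Nat.zero_le _, hjJ⟩) (by omega)
    have hsub : {ω | (Z ω : EReal) ≤ α (j - 1)} ⊆ {ω | (Z ω : EReal) ≤ α j} :=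
      fun ω hω => le_trans hω hab
    have hset : {ω | α (j - 1) < (Z ω : EReal) ∧ (Z ω : EReal) ≤ α j}
        = {ω | (Z ω : EReal) ≤ α j} \ {ω | (Z ω : EReal) ≤ α (j - 1)} := by
      ext ω
      simp only [Set.mem_setOf_eq, Set.mem_diff, not_le]
      tauto
    rw [hset, measure_diff hsub (hmLe _).nullMeasurableSet (measure_ne_top P _),
      ENNReal.toReal_sub_of_le (measure_mono hsub) (measure_ne_top P _), hF, hF]
  -- positivity gives P(Y = j) = P(A j) ≠ 0, and simplification of hsurr
  have hQ : ∀ j, 1 ≤ j → j ≤ J →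
      (P {ω | S ω ≤ c' ∧ Y ω = j}).toReal
        = (P {ω | Z ω ≤ c' ∧ α (j - 1) < (Z ω : EReal) ∧ (Z ω : EReal) ≤ α j}).toReal := by
    intro j hj1 hjJ
    have hDj : (P {ω | Y ω = j}).toReal
        = (P {ω | α (j - 1) < (Z ω : EReal) ∧ (Z ω : EReal) ≤ α j}).toReal := by
      rw [hcorrect j hj1 hjJ, hD j hj1 hjJ]
    have hne : (P {ω | α (j - 1) < (Z ω : EReal) ∧ (Z ω : EReal) ≤ α j}).toReal ≠ 0 :=
      ne_of_gt (hpos j hj1 hjJ)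
    rw [hsurr j hj1 hjJ c', hDj, mul_comm, div_mul_cancel₀ _ hne]
  -- every real lies in exactly one interval
  have hcover : ∀ x : ℝ, ∃ j ∈ Finset.Icc 1 J,
      α (j - 1) < (x : EReal) ∧ (x : EReal) ≤ α j := by
    intro x
    have hne : ((Finset.Icc 1 J).filter (fun j => (x : EReal) ≤ α j)).Nonempty := by
      refine ⟨J, ?_⟩
      simp [hJ, hαJ]
    set j := (((Finset.Icc 1 J).filter (fun j => (x : EReal) ≤ α j))).min' hne with hjdef
    have hjmem := Finset.min'_mem _ hne
    rw [Finset.mem_filter, Finset.mem_Icc] at hjmem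
    refine ⟨j, Finset.mem_Icc.mpr ⟨hjmem.1.1, hjmem.1.2⟩, ?_, hjmem.2⟩
    rcases Nat.eq_or_lt_of_le hjmem.1.1 with h1 | h2
    · have h0 : j - 1 = 0 := by omega
      rw [h0, hα0]
      exact EReal.bot_lt_coe x
    · -- j ≥ 2, so j - 1 ∈ [1, J] and j - 1 is not in the filter
      by_contra hcon
      push_neg at hcon
      have hmem : j - 1 ∈ (Finset.Icc 1 J).filter (fun j => (x : EReal) ≤ α j) := by
        rw [Finset.mem_filter, Finset.mem_Icc]
        exact ⟨⟨by omega, by omega⟩, hcon⟩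
      have := Finset.min'_le _ _ hmem
      omega
  have hdisj : ∀ j ∈ Finset.Icc 1 J, ∀ k ∈ Finset.Icc 1 J, j ≠ k → ∀ x : ℝ,
      α (j - 1) < (x : EReal) ∧ (x : EReal) ≤ α j →
      α (k - 1) < (x : EReal) ∧ (x : EReal) ≤ α k → False := by
    have key : ∀ j k : ℕ, j ∈ Finset.Icc 1 J → k ∈ Finset.Icc 1 J → j < k → ∀ x : ℝ,
        α (j - 1) < (x : EReal) ∧ (x : EReal) ≤ α j →
        α (k - 1) < (x : EReal) ∧ (x : EReal) ≤ α k → False := by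
      intro j k hj hk hjk x h1 h2
      rw [Finset.mem_Icc] at hj hk
      have : α j ≤ α (k - 1) :=
        hmono.monotoneOn (Set.mem_Icc.mpr ⟨Nat.zero_le _, hj.2⟩)
          (Set.mem_Icc.mpr ⟨Nat.zero_le _, by omega⟩) (by omega)
      exact absurd (lt_of_le_of_lt (le_trans h1.2 this) h2.1) (lt_irrefl _)
    intro j hj k hk hjk x h1 h2
    rcases Nat.lt_or_ge j k with h | h
    · exact key j k hj hk h x h1 h2
    · exact key k j hk hj (by omega) x h2 h1
  -- partition of {S ≤ c'} by values of Y
  have hSset : {ω | S ω ≤ c'} = ⋃ j ∈ Finset.Icc 1 J, {ω | S ω ≤ c' ∧ Y ω = j} := by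
    ext ω
    simp only [Set.mem_setOf_eq, Set.mem_iUnion, Finset.mem_Icc]
    constructor
    · intro h
      exact ⟨Y ω, ⟨(hY ω).1, (hY ω).2⟩, h, rfl⟩
    · rintro ⟨j, _, h, _⟩
      exact h
  have hSsum : (P {ω | S ω ≤ c'}).toReal
      = ∑ j ∈ Finset.Icc 1 J, (P {ω | S ω ≤ c' ∧ Y ω = j}).toReal := by
    rw [hSset, measure_biUnion_finset ?_ ?_, ENNReal.toReal_sum
      (fun j _ => measure_ne_top P _)]
    · intro j hj k hk hjk
      simp only [Function.onFun, Set.disjoint_left]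
      rintro ω ⟨_, hj'⟩ ⟨_, hk'⟩
      exact hjk (hj' ▸ hk' ▸ rfl)
    · intro j _
      exact (measurableSet_le hS measurable_const).inter (hYm (measurableSet_singleton j))
  -- partition of {Z ≤ c'} by the intervals
  have hZset : {ω | Z ω ≤ c'} = ⋃ j ∈ Finset.Icc 1 J,
      {ω | Z ω ≤ c' ∧ α (j - 1) < (Z ω : EReal) ∧ (Z ω : EReal) ≤ α j} := by
    ext ω
    simp only [Set.mem_setOf_eq, Set.mem_iUnion]
    constructor
    · intro h
      obtain ⟨j, hj, h1, h2⟩ := hcover (Z ω)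
      exact ⟨j, hj, h, h1, h2⟩
    · rintro ⟨j, _, h, _⟩
      exact h
  have hZsum : (P {ω | Z ω ≤ c'}).toReal
      = ∑ j ∈ Finset.Icc 1 J,
        (P {ω | Z ω ≤ c' ∧ α (j - 1) < (Z ω : EReal) ∧ (Z ω : EReal) ≤ α j}).toReal := by
    rw [hZset, measure_biUnion_finset ?_ ?_, ENNReal.toReal_sum
      (fun j _ => measure_ne_top P _)]
    · intro j hj k hk hjk
      simp only [Function.onFun, Set.disjoint_left]
      rintro ω ⟨_, hj'⟩ ⟨_, hk'⟩
      exact hdisj j hj k hk hjk (Z ω) hj' hk'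
    · intro j _
      exact (measurableSet_le hZ measurable_const).inter (hmA j)
  -- put it together
  have hset0 : {ω | S ω - m ≤ c} = {ω | S ω ≤ c'} := by
    ext ω
    simp only [Set.mem_setOf_eq, hc'def]
    constructor <;> intro h <;> linarith
  rw [hset0, hSsum]
  have hcongr : ∑ j ∈ Finset.Icc 1 J, (P {ω | S ω ≤ c' ∧ Y ω = j}).toReal
      = ∑ j ∈ Finset.Icc 1 J,
        (P {ω | Z ω ≤ c' ∧ α (j - 1) < (Z ω : EReal) ∧ (Z ω : EReal) ≤ α j}).toReal := by
    refine Finset.sum_congr rfl (fun j hj => ?_)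
    rw [Finset.mem_Icc] at hj
    exact hQ j hj.1 hj.2
  rw [hcongr, ← hZsum, hgauss]
  congr 1
  rw [hc'def]
  ring
end

section
/- Let B be a symmetric positive definite p×p real matrix with positive definite square root B^{1/2}, let H be a symmetric p×p real matrix such that yᵀ H y ≥ c · yᵀ B y for all y ∈ ℝ^p, where c > 0, and let v ∈ ℝ^p and δ > 0. Then for all x, x₀ ∈ ℝ^p with ‖B^{1/2}(x − x₀)‖ = δ, one has ⟨x − x₀, v⟩ − (1/2)·(x − x₀)ᵀ H (x − x₀) ≤ δ·( ‖B^{−1/2} v‖ − c·δ/2 ). -/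
open Matrix

/-- Let B be symmetric positive definite with symmetric positive
definite square root B^{1/2}, let H be symmetric with yᵀ H y ≥ c · yᵀ B y for
all y (c > 0), and let v ∈ ℝ^p, δ > 0. Then for all x, x₀ with
‖B^{1/2}(x − x₀)‖ = δ,
⟨x − x₀, v⟩ − (1/2)·(x − x₀)ᵀ H (x − x₀) ≤ δ·(‖B^{−1/2} v‖ − c·δ/2).
Euclidean norms are written via √(u ⬝ᵥ u). -/
theorem taylor_boundary_bound
    {p : ℕ} (B Bsqrt H : Matrix (Fin p) (Fin p) ℝ)
    (hB : B.PosDef) (hBsqrt : Bsqrt.PosDef) (hsq : Bsqrt * Bsqrt = B)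
    (hH : H.IsSymm) (c : ℝ) (hc : 0 < c)
    (hHB : ∀ y : Fin p → ℝ, c * (y ⬝ᵥ (B *ᵥ y)) ≤ y ⬝ᵥ (H *ᵥ y))
    (v : Fin p → ℝ) (δ : ℝ) (hδ : 0 < δ)
    (x x₀ : Fin p → ℝ)
    (hxδ : Real.sqrt ((Bsqrt *ᵥ (x - x₀)) ⬝ᵥ (Bsqrt *ᵥ (x - x₀))) = δ) :
    (x - x₀) ⬝ᵥ v - (1 / 2) * ((x - x₀) ⬝ᵥ (H *ᵥ (x - x₀)))
      ≤ δ * (Real.sqrt ((Bsqrt⁻¹ *ᵥ v) ⬝ᵥ (Bsqrt⁻¹ *ᵥ v)) - c * δ / 2) := by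
  set u := x - x₀ with hu
  have hsymm : Bsqrtᵀ = Bsqrt := hBsqrt.isHermitian
  have hinv : IsUnit Bsqrt.det := (Matrix.isUnit_iff_isUnit_det _).mp hBsqrt.isUnit
  -- w = Bsqrt u
  set w := Bsqrt *ᵥ u with hw
  set z := Bsqrt⁻¹ *ᵥ v with hz
  have hww : w ⬝ᵥ w = δ ^ 2 := by
    have h0 : 0 ≤ w ⬝ᵥ w := by
      simpa [dotProduct, sq] using Finset.sum_nonneg fun i _ => mul_self_nonneg (w i)
    have := congrArg (· ^ 2) hxδ
    simpa [Real.sq_sqrt h0] using this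
  -- u ⬝ v = w ⬝ z
  have huv : u ⬝ᵥ v = w ⬝ᵥ z := by
    have hv : Bsqrt *ᵥ z = v := by
      rw [hz, Matrix.mulVec_mulVec, Matrix.mul_nonsing_inv _ hinv, Matrix.one_mulVec]
    calc u ⬝ᵥ v = u ⬝ᵥ (Bsqrt *ᵥ z) := by rw [hv]
    _ = (Bsqrtᵀ *ᵥ u) ⬝ᵥ z := by
          rw [Matrix.dotProduct_mulVec, Matrix.mulVec_transpose]
    _ = w ⬝ᵥ z := by rw [hsymm]
  -- u ⬝ B u = w ⬝ w
  have huBu : u ⬝ᵥ (B *ᵥ u) = w ⬝ᵥ w := by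
    rw [← hsq, ← Matrix.mulVec_mulVec, Matrix.dotProduct_mulVec, ← hsymm,
      Matrix.vecMul_transpose, hsymm]
  -- Cauchy-Schwarz
  have hcs : w ⬝ᵥ z ≤ δ * Real.sqrt (z ⬝ᵥ z) := by
    have h0 := Real.sum_mul_le_sqrt_mul_sqrt Finset.univ w z
    have he : Real.sqrt (∑ i, w i ^ 2) = δ := by
      rw [show (∑ i, w i ^ 2) = w ⬝ᵥ w from by simp [dotProduct, sq]]; exact hxδ
    have he2 : (∑ i, z i ^ 2) = z ⬝ᵥ z := by simp [dotProduct, sq]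
    rw [he, he2] at h0
    simpa [dotProduct] using h0
  have hquad : c * δ ^ 2 ≤ u ⬝ᵥ (H *ᵥ u) := by
    have := hHB u
    rwa [huBu, hww] at this
  have : u ⬝ᵥ v - (1/2) * (u ⬝ᵥ (H *ᵥ u)) ≤ δ * Real.sqrt (z ⬝ᵥ z) - (1/2) * (c * δ ^ 2) := by
    have h1 : u ⬝ᵥ v ≤ δ * Real.sqrt (z ⬝ᵥ z) := huv ▸ hcs
    nlinarith
  calc u ⬝ᵥ v - (1/2) * (u ⬝ᵥ (H *ᵥ u)) ≤ δ * Real.sqrt (z ⬝ᵥ z) - (1/2) * (c * δ ^ 2) := this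
  _ = δ * (Real.sqrt (z ⬝ᵥ z) - c * δ / 2) := by ring
end

section
/- Let f_n : ℝ^p → ℝ (n ∈ ℕ) and f : ℝ^p → ℝ be concave functions such that f_n(x) → f(x) as n → ∞ for every x ∈ ℝ^p. Suppose f has a unique global maximizer x*, in the sense that f(x) < f(x*) for every x ≠ x*, and suppose for each n that x_n is a global maximizer of f_n (f_n(x_n) ≥ f_n(y) for all y ∈ ℝ^p). Then x_n → x*. -/
set_option maxHeartbeats 1000000

open Filter

/-- If concave functions f_n converge pointwise to a concave
function f with a unique global maximizer x*, and x_n is a global maximizer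
of f_n for each n, then x_n → x*. -/
theorem argmax_consistency_concave
    {p : ℕ} (f : ℕ → EuclideanSpace ℝ (Fin p) → ℝ)
    (g : EuclideanSpace ℝ (Fin p) → ℝ)
    (hfconc : ∀ n, ConcaveOn ℝ Set.univ (f n))
    (hgconc : ConcaveOn ℝ Set.univ g)
    (hconv : ∀ x, Tendsto (fun n => f n x) atTop (nhds (g x)))
    (xstar : EuclideanSpace ℝ (Fin p))
    (hunique : ∀ x, x ≠ xstar → g x < g xstar)
    (xn : ℕ → EuclideanSpace ℝ (Fin p))
    (hxn : ∀ n, ∀ y, f n y ≤ f n (xn n)) :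
    Tendsto xn atTop (nhds xstar) := by
  classical
  have hgcont : Continuous g := by
    rw [← continuousOn_univ]
    exact hgconc.continuousOn isOpen_univ
  rw [Metric.tendsto_nhds]
  intro ε hε
  set S := Metric.sphere xstar ε with hSdef
  -- The gap δ on the sphere
  obtain ⟨δ, hδpos, hδ⟩ : ∃ δ > 0, ∀ y ∈ S, g y ≤ g xstar - δ := by
    rcases S.eq_empty_or_nonempty with h | h
    · exact ⟨1, one_pos, by simp [h]⟩
    · obtain ⟨y₀, hy₀S, hy₀max⟩ :=
        (isCompact_sphere xstar ε).exists_isMaxOn h hgcont.continuousOn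
      have hy₀ne : y₀ ≠ xstar := by
        intro hcon
        have h1 : dist y₀ xstar = ε := Metric.mem_sphere.mp hy₀S
        rw [hcon, dist_self] at h1
        linarith
      refine ⟨g xstar - g y₀, sub_pos.2 (hunique y₀ hy₀ne), fun y hy => ?_⟩
      have := hy₀max hy
      simp only [Set.mem_setOf_eq] at this
      linarith [this]
  -- A simplex whose convex hull contains the ball of radius 4ε
  obtain ⟨b, hxb, -⟩ :=
    exists_mem_interior_convexHull_affineBasis (s := (Set.univ : Set (EuclideanSpace ℝ (Fin p))))
      (x := xstar) Filter.univ_mem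
  obtain ⟨ρ, hρpos, hρ⟩ := Metric.isOpen_iff.1 isOpen_interior xstar hxb
  have hρ' : Metric.ball xstar ρ ⊆ convexHull ℝ (Set.range b) := hρ.trans interior_subset
  set lam : ℝ := 5 * ε / ρ with hlamdef
  have hlampos : 0 < lam := by positivity
  set hom := AffineMap.homothety xstar lam with homdef
  set V : Set (EuclideanSpace ℝ (Fin p)) := hom '' Set.range b with hVdef
  have hVfin : V.Finite := (Set.finite_range b).image _
  have hVne : V.Nonempty := (Set.range_nonempty b).image _
  have hball : Metric.closedBall xstar (4 * ε) ⊆ convexHull ℝ V := by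
    intro a ha
    have hmem : a ∈ hom '' Metric.ball xstar ρ := by
      refine ⟨xstar + lam⁻¹ • (a - xstar), ?_, ?_⟩
      · rw [Metric.mem_ball, dist_eq_norm]
        have hd : ‖a - xstar‖ ≤ 4 * ε := by
          rw [← dist_eq_norm]; exact Metric.mem_closedBall.mp ha
        have h1 : ‖xstar + lam⁻¹ • (a - xstar) - xstar‖ = lam⁻¹ * ‖a - xstar‖ := by
          rw [add_sub_cancel_left, norm_smul, Real.norm_eq_abs, abs_of_pos (by positivity)]
        rw [h1]
        have h2 : lam⁻¹ * ‖a - xstar‖ ≤ lam⁻¹ * (4 * ε) :=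
          mul_le_mul_of_nonneg_left hd (by positivity)
        have h3 : lam⁻¹ * (4 * ε) = 4 * ρ / 5 := by
          rw [hlamdef]; field_simp
        linarith
      · rw [homdef, AffineMap.homothety_apply]
        simp only [vsub_eq_sub, vadd_eq_add, add_sub_cancel_left, smul_smul]
        rw [mul_inv_cancel₀ hlampos.ne', one_smul]
        abel
    have himg : hom '' Metric.ball xstar ρ ⊆ hom '' convexHull ℝ (Set.range b) :=
      Set.image_mono hρ'
    have heq : hom '' convexHull ℝ (Set.range b) = convexHull ℝ V := by
      rw [hVdef, ← AffineMap.image_convexHull]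
    exact heq ▸ himg hmem
  -- minimum of g on V
  obtain ⟨v₀, hv₀V, hv₀min⟩ := Set.exists_min_image V g hVfin hVne
  set m : ℝ := g v₀ - 1 with hmdef
  set M₀ : ℝ := 2 * (g xstar + 1) - m with hM₀def
  set M : ℝ := |m| + |M₀| with hMdef
  set Kr : ℝ := |2 * M / (2 * ε)| + 1 with hKrdef
  have hKrpos : 0 < Kr := by positivity
  set η : ℝ := δ / (4 * Kr) with hηdef
  have hηpos : 0 < η := by positivity
  -- finite net on the sphere
  obtain ⟨T, hTS, hTcov⟩ :=
    (isCompact_sphere xstar ε).elim_nhds_subcover (fun c => Metric.ball c η)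
      (fun c _ => Metric.ball_mem_nhds c hηpos)
  -- eventual facts
  have hA : ∀ᶠ n in atTop, ∀ v ∈ V, g v - 1 ≤ f n v := by
    rw [eventually_all_finite hVfin]
    intro v _
    exact (hconv v).eventually (eventually_ge_nhds (by linarith))
  have hB : ∀ᶠ n in atTop, f n xstar ≤ g xstar + 1 :=
    (hconv xstar).eventually (eventually_le_nhds (by linarith))
  have hD : ∀ᶠ n in atTop, g xstar - δ / 4 ≤ f n xstar :=
    (hconv xstar).eventually (eventually_ge_nhds (by linarith))
  have hC : ∀ᶠ n in atTop, ∀ c ∈ T, |f n c - g c| ≤ δ / 4 := by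
    rw [Filter.eventually_all_finset T]
    intro c _
    have := (hconv c).eventually (Metric.closedBall_mem_nhds (g c) (by positivity : (0:ℝ) < δ/4))
    filter_upwards [this] with n hn
    rw [← Real.dist_eq]
    exact Metric.mem_closedBall.mp hn
  filter_upwards [hA, hB, hC, hD] with n hAn hBn hCn hDn
  -- lower bound on the big ball
  have hmlow : ∀ a ∈ Metric.closedBall xstar (4 * ε), m ≤ f n a := by
    intro a ha
    obtain ⟨v, hvV, hvle⟩ :=
      (hfconc n).exists_le_of_mem_convexHull (Set.subset_univ V) (hball ha)
    have := hAn v hvV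
    have := hv₀min v hvV
    linarith
  -- upper bound on the big ball
  have hup : ∀ a ∈ Metric.closedBall xstar (4 * ε), f n a ≤ M₀ := by
    intro a ha
    set a' : EuclideanSpace ℝ (Fin p) := xstar + (xstar - a) with ha'def
    have ha' : a' ∈ Metric.closedBall xstar (4 * ε) := by
      rw [Metric.mem_closedBall, dist_eq_norm] at ha ⊢
      have h1 : a' - xstar = -(a - xstar) := by rw [ha'def]; abel
      rw [h1, norm_neg]; exact ha
    have hcomb : (1/2 : ℝ) • a + (1/2 : ℝ) • a' = xstar := by
      rw [ha'def]; module
    have hcc := (hfconc n).2 (Set.mem_univ a) (Set.mem_univ a')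
      (by norm_num : (0:ℝ) ≤ 1/2) (by norm_num : (0:ℝ) ≤ 1/2) (by norm_num)
    rw [hcomb] at hcc
    simp only [smul_eq_mul] at hcc
    have h1 := hmlow a' ha'
    linarith
  have habs : ∀ a, dist a xstar < 4 * ε → |f n a| ≤ M := by
    intro a ha
    have ha' : a ∈ Metric.closedBall xstar (4 * ε) := Metric.mem_closedBall.mpr ha.le
    have h1 := hmlow a ha'
    have h2 := hup a ha'
    rw [abs_le]
    constructor
    · have := neg_abs_le m; have := abs_nonneg M₀; rw [hMdef]; linarith
    · have := le_abs_self M₀; have := abs_nonneg m; rw [hMdef]; linarith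
  -- Lipschitz on ball of radius 2ε
  have hLip0 := ((hfconc n).subset (Set.subset_univ _)
      (convex_ball xstar (4 * ε))).lipschitzOnWith_of_abs_le
      (show (0:ℝ) < 2 * ε by positivity) habs
  have h42 : 4 * ε - 2 * ε = 2 * ε := by ring
  rw [h42] at hLip0
  have hKle : ((2 * M / (2 * ε)).toNNReal : ℝ) ≤ Kr := by
    rw [Real.coe_toNNReal', hKrdef]
    rcases le_total (2 * M / (2 * ε)) 0 with h | h
    · rw [max_eq_right h]; positivity
    · rw [max_eq_left h]; have := le_abs_self (2 * M / (2 * ε)); linarith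
  -- the claim: f n < f n xstar on the sphere
  have claim : ∀ y ∈ S, f n y < f n xstar := by
    intro y hy
    have hycov := hTcov hy
    simp only [Set.mem_iUnion, exists_prop] at hycov
    obtain ⟨c, hcT, hyc⟩ := hycov
    have hcS : c ∈ S := hTS c hcT
    have hyb : y ∈ Metric.ball xstar (2 * ε) := by
      rw [Metric.mem_ball]
      rw [hSdef, Metric.mem_sphere] at hy
      linarith
    have hcb : c ∈ Metric.ball xstar (2 * ε) := by
      rw [Metric.mem_ball]
      rw [hSdef, Metric.mem_sphere] at hcS
      linarith
    have hd := hLip0.dist_le_mul y hyb c hcb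
    have hdyc : dist y c < η := Metric.mem_ball.mp hyc
    have h5 : ((2 * M / (2 * ε)).toNNReal : ℝ) * dist y c ≤ Kr * η :=
      mul_le_mul hKle hdyc.le dist_nonneg hKrpos.le
    have hKη : Kr * η = δ / 4 := by
      rw [hηdef]; field_simp
    have h6 : |f n y - f n c| ≤ δ / 4 := by
      rw [← Real.dist_eq]; rw [hKη] at h5; linarith
    have h7 := hCn c hcT
    have h8 := hδ c (hTS c hcT)
    have h9 := hDn
    rw [abs_le] at h6 h7
    have hS' : c ∈ S := hTS c hcT
    linarith [h6.2, h7.2]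
  -- conclude
  by_contra hcon
  push_neg at hcon
  set d : ℝ := dist (xn n) xstar with hddef
  have hd0 : 0 < d := lt_of_lt_of_le hε hcon
  set t : ℝ := ε / d with htdef
  have ht0 : 0 < t := by positivity
  have ht1 : t ≤ 1 := by rw [htdef]; exact div_le_one_of_le₀ hcon dist_nonneg
  set y : EuclideanSpace ℝ (Fin p) := xstar + t • (xn n - xstar) with hydef
  have hyS : y ∈ S := by
    rw [hSdef, Metric.mem_sphere, dist_eq_norm, hydef]
    have h1 : xstar + t • (xn n - xstar) - xstar = t • (xn n - xstar) := by abel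
    rw [h1, norm_smul, Real.norm_eq_abs, abs_of_pos ht0]
    have h2 : ‖xn n - xstar‖ = d := by rw [hddef, dist_eq_norm]
    rw [h2, htdef]
    field_simp
  have hcomb : (1 - t) • xstar + t • (xn n) = y := by
    rw [hydef]; module
  have hcc := (hfconc n).2 (Set.mem_univ xstar) (Set.mem_univ (xn n))
    (by linarith : (0:ℝ) ≤ 1 - t) ht0.le (by ring)
  rw [hcomb] at hcc
  simp only [smul_eq_mul] at hcc
  have h1 := hxn n xstar
  have h2 := claim y hyS
  nlinarith [mul_nonneg ht0.le (sub_nonneg.2 h1)]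
end
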